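/- The kernel of the ℤ-linear map Θ1 : ℤ[Γ] → ℤ[ℙ¹(ℚ)] defined by Θ1(γ) = [γ·∞] − [γ·0] is exactly the left ideal of ℤ[Γ] generated by 1+S and 1+U+U². -/

import Mathlib

open MvPolynomial

/-- `SL(2, ℤ)`. -/
abbrev SL2Z := Matrix.SpecialLinearGroup (Fin 2) ℤ

instance : Fact (Even (Fintype.card (Fin 2))) := ⟨by decide⟩

/-- The subgroup `{±1}` of `SL(2,ℤ)`. -/
def pmOne : Subgroup SL2Z := Subgroup.zpowers (-1 : SL2Z)

instance pmOne_normal : pmOne.Normal := by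
  constructor
  intro x hx g
  obtain ⟨k, rfl⟩ := Subgroup.mem_zpowers_iff.mp hx
  have hc : Commute g ((-1 : SL2Z) ^ k) := by
    refine Commute.zpow_right ?_ k
    unfold Commute SemiconjBy
    rw [mul_neg_one, neg_one_mul]
  rw [hc.eq, mul_assoc, mul_inv_cancel, mul_one]
  exact Subgroup.mem_zpowers_iff.mpr ⟨k, rfl⟩

/-- `Γ = PSL(2, ℤ) = SL(2,ℤ)/{±1}`. -/
abbrev PSL2Z := SL2Z ⧸ pmOne

/-- `S = [[0,-1],[1,0]]` in `Γ`. -/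
def pS : PSL2Z := QuotientGroup.mk ⟨!![0, -1; 1, 0], by norm_num [Matrix.det_fin_two_of]⟩

/-- `U = [[0,1],[-1,1]]` in `Γ`. -/
def pU : PSL2Z := QuotientGroup.mk ⟨!![0, 1; -1, 1], by norm_num [Matrix.det_fin_two_of]⟩

/-- `T = [[1,1],[0,1]]` in `Γ`. -/
def pT : PSL2Z := QuotientGroup.mk ⟨!![1, 1; 0, 1], by norm_num [Matrix.det_fin_two_of]⟩

/-- The cusps `ℙ¹(ℚ) = ℚ ∪ {∞}`. -/
abbrev Cusp := OnePoint ℚ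

/-- The Möbius action of `SL(2, ℤ)` on the cusps. -/
def mobiusSL (γ : SL2Z) : Cusp → Cusp := fun x =>
  match x with
  | OnePoint.infty =>
      if ((γ.1 1 0 : ℤ) : ℚ) = 0 then OnePoint.infty
      else OnePoint.some (((γ.1 0 0 : ℤ) : ℚ) / ((γ.1 1 0 : ℤ) : ℚ))
  | OnePoint.some r =>
      if ((γ.1 1 0 : ℤ) : ℚ) * r + ((γ.1 1 1 : ℤ) : ℚ) = 0 then OnePoint.infty
      else OnePoint.some
        ((((γ.1 0 0 : ℤ) : ℚ) * r + ((γ.1 0 1 : ℤ) : ℚ)) /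
          (((γ.1 1 0 : ℤ) : ℚ) * r + ((γ.1 1 1 : ℤ) : ℚ)))

lemma mobiusSL_neg (γ : SL2Z) : mobiusSL (-γ) = mobiusSL γ := by
  funext x
  cases x with
  | none =>
      simp only [mobiusSL, Matrix.SpecialLinearGroup.coe_neg, Matrix.neg_apply, Int.cast_neg,
        neg_eq_zero, neg_div_neg_eq]
  | some r =>
      simp only [mobiusSL, Matrix.SpecialLinearGroup.coe_neg, Matrix.neg_apply, Int.cast_neg,
        neg_mul, ← neg_add, neg_eq_zero, neg_div_neg_eq]

/-- The Möbius action of `Γ = PSL(2, ℤ)` on the cusps. -/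
def mobius (q : PSL2Z) : Cusp → Cusp :=
  Quotient.liftOn q mobiusSL (by
    intro a b h
    replace h : a⁻¹ * b ∈ pmOne := QuotientGroup.leftRel_apply.mp h
    obtain ⟨k, hk⟩ := Subgroup.mem_zpowers_iff.mp h
    have hb : b = a * (-1 : SL2Z) ^ k := by rw [hk, mul_inv_cancel_left]
    rcases Int.even_or_odd k with he | ho
    · rw [hb, he.neg_one_zpow, mul_one]
    · obtain ⟨m, rfl⟩ := ho
      have h2 : ((-1 : SL2Z)) ^ (2 * m) = 1 := Even.neg_one_zpow ⟨m, by ring⟩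
      rw [hb, zpow_add_one, h2, one_mul, mul_neg_one, mobiusSL_neg])

/-- The cusp `∞`. -/
def cInf : Cusp := OnePoint.infty

/-- The cusp `0`. -/
def cZero : Cusp := OnePoint.some 0

/-- The map `Θ1 : ℤ[Γ] → ℤ[ℙ¹(ℚ)]`, `γ ↦ [γ·∞] - [γ·0]`, extended `ℤ`-linearly. -/
noncomputable def Theta1 (g : MonoidAlgebra ℤ PSL2Z) : FreeAbelianGroup Cusp :=
  Finsupp.sum g.coeff fun γ n =>
    n • (FreeAbelianGroup.of (mobius γ cInf) - FreeAbelianGroup.of (mobius γ cZero))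

/-!
Identify `γ ∈ Γ` with the oriented edge from `γ·0` to `γ·∞` of the Farey tessellation. Modulo the
ideal, `1 + S` says that reversing an edge negates it and `1 + U + U²` that the three edges of a
Farey triangle sum to zero; `Θ1` is `Γ`-equivariant and kills both, so the ideal lies in the kernel.
Conversely, every `r ∈ ℚ` is joined by an edge to its Farey parent, a cusp of smaller denominator,
and summing these edges gives a path `P x ∈ ℤ[Γ]` from `∞` to every cusp `x`. By induction on the
sum of the denominators of its endpoints, each `γ` is congruent to `P (γ·∞) - P (γ·0)`: an edge
that does not join a cusp to its parent lies in a Farey triangle whose third vertex is the parent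
of its endpoint of larger denominator. Hence `x ≡ P (Θ1 x)` modulo the ideal for all `x`.
-/

open OnePoint Matrix.SpecialLinearGroup

lemma mobiusSL_eq_smul (A : SL2Z) (x : Cusp) : mobiusSL A x = mapGL ℚ A • x := by
  induction x using OnePoint.rec with
  | infty => simp [mobiusSL, smul_infty_eq_ite]
  | coe r => simp [mobiusSL, smul_some_eq_ite]

instance : MulAction PSL2Z Cusp where
  smul := mobius
  one_smul x := by
    change mobiusSL 1 x = x
    rw [mobiusSL_eq_smul, map_one, one_smul]
  mul_smul g h x := by
    induction g using QuotientGroup.induction_on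
    induction h using QuotientGroup.induction_on
    change mobiusSL (_ * _) x = mobiusSL _ (mobiusSL _ x)
    simp only [mobiusSL_eq_smul, map_mul, mul_smul]

lemma mk_smul_eq_mapGL_smul (A : SL2Z) (x : Cusp) :
    (QuotientGroup.mk A : PSL2Z) • x = mapGL ℚ A • x :=
  mobiusSL_eq_smul A x

lemma SL2Z_det_fin_two (A : SL2Z) : A 0 0 * A 1 1 - A 0 1 * A 1 0 = 1 := by
  simpa [-Matrix.SpecialLinearGroup.det_coe, Matrix.det_fin_two] using A.2

lemma mk_neg (A : SL2Z) : (QuotientGroup.mk (-A) : PSL2Z) = QuotientGroup.mk A := by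
  rw [QuotientGroup.eq, inv_neg, neg_mul, inv_mul_cancel]
  exact Subgroup.mem_zpowers _

lemma pS_eq : pS = QuotientGroup.mk ModularGroup.S := rfl

lemma pS_mul_pS : pS * pS = 1 := by
  rw [pS_eq, ← QuotientGroup.mk_mul, show ModularGroup.S * ModularGroup.S = -1 by decide, mk_neg,
    QuotientGroup.mk_one]

lemma pT_zpow_eq (t : ℤ) : pT ^ t = QuotientGroup.mk (ModularGroup.T ^ t) :=
  (QuotientGroup.mk_zpow _ ModularGroup.T t).symm

lemma pS_smul_infty : pS • cInf = cZero := by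
  rw [pS_eq, mk_smul_eq_mapGL_smul]; simp [cInf, cZero, smul_infty_eq_ite]

lemma pS_smul_zero : pS • cZero = cInf := by
  rw [pS_eq, mk_smul_eq_mapGL_smul]; simp [cInf, cZero, smul_some_eq_ite]

lemma pS_smul_one : pS • ((1 : ℚ) : Cusp) = ((-1 : ℚ) : Cusp) := by
  rw [pS_eq, mk_smul_eq_mapGL_smul]; simp [smul_some_eq_ite]

lemma pS_smul_neg_one : pS • ((-1 : ℚ) : Cusp) = ((1 : ℚ) : Cusp) := by
  rw [pS_eq, mk_smul_eq_mapGL_smul]; simp [smul_some_eq_ite]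

lemma pT_zpow_smul_coe (t : ℤ) (x : ℚ) : pT ^ t • (x : Cusp) = ((x + t : ℚ) : Cusp) := by
  rw [pT_zpow_eq, mk_smul_eq_mapGL_smul, smul_some_eq_ite]
  simp [ModularGroup.coe_T_zpow, -map_zpow]

lemma pT_zpow_smul_infty (t : ℤ) : pT ^ t • cInf = cInf := by
  rw [pT_zpow_eq, cInf, mk_smul_eq_mapGL_smul, smul_infty_eq_self_iff]
  simp [ModularGroup.coe_T_zpow, -map_zpow]

lemma pU_eq : pU = pS * pT ^ (-1 : ℤ) := by
  rw [pS_eq, pT_zpow_eq, ← QuotientGroup.mk_mul, ← mk_neg]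
  exact congrArg _ (Subtype.ext (by decide))

lemma pU_smul_infty : pU • cInf = cZero := by
  rw [pU_eq, mul_smul, pT_zpow_smul_infty, pS_smul_infty]

lemma pU_smul_zero : pU • cZero = ((1 : ℚ) : Cusp) := by
  rw [pU_eq, mul_smul, cZero, pT_zpow_smul_coe]
  norm_num [pS_smul_neg_one]

lemma pU_smul_one : pU • ((1 : ℚ) : Cusp) = cInf := by
  rw [pU_eq, mul_smul, pT_zpow_smul_coe]
  norm_num
  exact pS_smul_zero

lemma exists_eq_pT_zpow_of_smul_infty {g : PSL2Z} (hg : g • cInf = cInf) :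
    ∃ t : ℤ, g = pT ^ t := by
  induction g using QuotientGroup.induction_on with | H A => ?_
  rw [cInf, mk_smul_eq_mapGL_smul, smul_infty_eq_self_iff] at hg
  have hc : A 1 0 = 0 := by simpa using hg
  have had : A 0 0 * A 1 1 = 1 := by simpa [hc] using SL2Z_det_fin_two A
  rcases Int.eq_one_or_neg_one_of_mul_eq_one' had with ⟨ha, hd⟩ | ⟨ha, hd⟩
  · refine ⟨A 0 1, ?_⟩
    rw [pT_zpow_eq]
    congr 1
    ext i j; fin_cases i <;> fin_cases j <;> simp [ha, hc, hd, ModularGroup.coe_T_zpow]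
  · refine ⟨-A 0 1, ?_⟩
    rw [pT_zpow_eq, ← mk_neg]
    congr 1
    ext i j; fin_cases i <;> fin_cases j <;> simp [ha, hc, hd, ModularGroup.coe_T_zpow]

lemma eq_of_smul_zero_eq_of_smul_infty_eq {g h : PSL2Z} (h0 : g • cZero = h • cZero)
    (hinf : g • cInf = h • cInf) : g = h := by
  obtain ⟨t, ht⟩ := exists_eq_pT_zpow_of_smul_infty (g := h⁻¹ * g)
    (by rw [mul_smul, hinf, inv_smul_smul])
  have h0' : pT ^ t • cZero = cZero := by rw [← ht, mul_smul, h0, inv_smul_smul]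
  rw [cZero, pT_zpow_smul_coe, zero_add] at h0'
  have : t = 0 := by exact_mod_cast OnePoint.coe_injective h0'
  rw [this, zpow_zero, inv_mul_eq_one] at ht
  exact ht.symm

def cden (x : Cusp) : ℕ := x.elim 0 Rat.den

lemma cden_eq_zero_iff {x : Cusp} : cden x = 0 ↔ x = cInf := by
  induction x using OnePoint.rec with
  | infty => exact iff_of_true rfl rfl
  | coe r => exact iff_of_false r.den_nz (OnePoint.coe_ne_infty r)

lemma den_intCast_div_of_isCoprime {a c : ℤ} (h : IsCoprime a c) (hc : c ≠ 0) :
    ((a : ℚ) / c).den = c.natAbs := by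
  rw [Rat.intCast_div_eq_divInt, Rat.den_divInt, if_neg hc, Int.gcd_comm,
    Int.isCoprime_iff_gcd_eq_one.mp h, Nat.div_one]

lemma cden_mk_smul_infty (A : SL2Z) :
    cden ((QuotientGroup.mk A : PSL2Z) • cInf) = (A 1 0).natAbs := by
  rw [cInf, mk_smul_eq_mapGL_smul, smul_infty_eq_ite]
  by_cases hc : A 1 0 = 0
  · simp [hc, cden]
  · have hcop : IsCoprime (A 0 0) (A 1 0) :=
      ⟨A 1 1, -A 0 1, by linear_combination SL2Z_det_fin_two A⟩
    simpa [hc, cden] using den_intCast_div_of_isCoprime hcop hc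

lemma cden_mk_smul_zero (A : SL2Z) :
    cden ((QuotientGroup.mk A : PSL2Z) • cZero) = (A 1 1).natAbs := by
  rw [← pS_smul_infty, ← mul_smul, pS_eq, ← QuotientGroup.mk_mul, cden_mk_smul_infty]
  simp [Matrix.mul_apply, Fin.sum_univ_two]

-- The edge from `r` to its Farey parent: an edge `[[num r, *], [den r, s]]` with `0 ≤ s < den r`.
lemma exists_parentEdgeMatrix (r : ℚ) :
    ∃ A : SL2Z, A 0 0 = r.num ∧ A 1 0 = r.den ∧ 0 ≤ A 1 1 ∧ A 1 1 < r.den := by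
  obtain ⟨B, hB0, hB1⟩ := (Rat.isCoprime_num_den r).exists_SL2_col 0
  have hden : (0 : ℤ) < r.den := by exact_mod_cast r.pos
  have h11 : (B * ModularGroup.T ^ (-(B 1 1 / r.den))) 1 1 = B 1 1 % r.den := by
    simp [Matrix.mul_apply, Fin.sum_univ_two, ModularGroup.coe_T_zpow, hB1, Int.emod_def]
    ring
  refine ⟨B * ModularGroup.T ^ (-(B 1 1 / r.den)), ?_, ?_, ?_, ?_⟩
  · simp [Matrix.mul_apply, Fin.sum_univ_two, ModularGroup.coe_T_zpow, hB0]
  · simp [Matrix.mul_apply, Fin.sum_univ_two, ModularGroup.coe_T_zpow, hB1]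
  · exact h11 ▸ Int.emod_nonneg _ hden.ne'
  · exact h11 ▸ Int.emod_lt_of_pos _ hden

noncomputable def parentEdgeMatrix (r : ℚ) : SL2Z := (exists_parentEdgeMatrix r).choose

lemma parentEdgeMatrix_spec (r : ℚ) :
    parentEdgeMatrix r 0 0 = r.num ∧ parentEdgeMatrix r 1 0 = r.den ∧
      0 ≤ parentEdgeMatrix r 1 1 ∧ parentEdgeMatrix r 1 1 < r.den :=
  (exists_parentEdgeMatrix r).choose_spec

noncomputable def parentEdge (r : ℚ) : PSL2Z := QuotientGroup.mk (parentEdgeMatrix r)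

noncomputable def parent (r : ℚ) : Cusp := parentEdge r • cZero

lemma parentEdge_smul_infty (r : ℚ) : parentEdge r • cInf = r := by
  obtain ⟨h00, h10, -, -⟩ := parentEdgeMatrix_spec r
  rw [parentEdge, cInf, mk_smul_eq_mapGL_smul, smul_infty_eq_ite]
  simp [h00, h10, Rat.num_div_den]

lemma cden_parent_lt (r : ℚ) : cden (parent r) < r.den := by
  obtain ⟨-, -, h11, h11'⟩ := parentEdgeMatrix_spec r
  rw [parent, parentEdge, cden_mk_smul_zero]
  omega

lemma exists_eq_parentEdge_mul_zpow_mul {g : PSL2Z} {r : ℚ} (h : g • cZero = r) :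
    ∃ t : ℤ, g = parentEdge r * pT ^ t * pS := by
  obtain ⟨t, ht⟩ := exists_eq_pT_zpow_of_smul_infty (g := (parentEdge r)⁻¹ * g * pS) (by
    rw [mul_smul, mul_smul, pS_smul_infty, h, inv_smul_eq_iff, parentEdge_smul_infty])
  exact ⟨t, by simp [← ht, mul_assoc, pS_mul_pS]⟩

lemma parentEdge_mul_zpow_smul (r : ℚ) (t : ℤ) :
    (parentEdge r * pT ^ t) • ((-t : ℚ) : Cusp) = parent r := by
  rw [mul_smul, pT_zpow_smul_coe, neg_add_cancel]
  rfl

lemma cden_parentEdge_mul_zpow_smul_zero (r : ℚ) (t : ℤ) :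
    cden ((parentEdge r * pT ^ t) • cZero) = (r.den * t + parentEdgeMatrix r 1 1).natAbs := by
  obtain ⟨-, h10, -, -⟩ := parentEdgeMatrix_spec r
  rw [parentEdge, pT_zpow_eq, ← QuotientGroup.mk_mul, cden_mk_smul_zero]
  simp [Matrix.mul_apply, Fin.sum_univ_two, ModularGroup.coe_T_zpow, h10]

lemma parent_eq_smul_infty_or_smul_one_or_smul_neg_one {g : PSL2Z} {r : ℚ}
    (h0 : g • cZero = r) (hden : cden (g • cInf) ≤ r.den) :
    parent r = g • cInf ∨ parent r = g • ((1 : ℚ) : Cusp) ∨ parent r = g • ((-1 : ℚ) : Cusp) := by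
  -- `den (g • ∞) = |den r * t + s|` with `0 ≤ s < den r` forces `|t| ≤ 1`
  obtain ⟨t, rfl⟩ := exists_eq_parentEdge_mul_zpow_mul h0
  obtain ⟨-, -, h11, h11'⟩ := parentEdgeMatrix_spec r
  rw [mul_smul, pS_smul_infty, cden_parentEdge_mul_zpow_smul_zero] at hden
  have habs : |(r.den : ℤ) * t + parentEdgeMatrix r 1 1| ≤ r.den := by
    rw [Int.abs_eq_natAbs]; exact_mod_cast hden
  have ht : -1 ≤ t ∧ t ≤ 1 := by
    constructor <;> by_contra! h <;> nlinarith [abs_le.mp habs]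
  rw [← parentEdge_mul_zpow_smul r t, mul_smul _ pS, mul_smul _ pS, mul_smul _ pS]
  obtain ⟨ht1, ht2⟩ := ht
  interval_cases t
  · exact Or.inr (Or.inr (by rw [pS_smul_neg_one]; norm_num))
  · exact Or.inl (by rw [pS_smul_infty]; norm_num; rfl)
  · exact Or.inr (Or.inl (by rw [pS_smul_one]; norm_num))

local notation "ℤ[Γ]" => MonoidAlgebra ℤ PSL2Z

local notation "ι" => MonoidAlgebra.of ℤ PSL2Z

noncomputable def cuspPath : Cusp → ℤ[Γ]
  | .infty => 0
  | .some r => cuspPath (parent r) + ι (parentEdge r)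
termination_by x => cden x
decreasing_by exact cden_parent_lt r

lemma cuspPath_coe (r : ℚ) : cuspPath r = cuspPath (parent r) + ι (parentEdge r) := cuspPath.eq_2 r

noncomputable def maninIdeal : Ideal ℤ[Γ] :=
  Ideal.span {1 + ι pS, 1 + ι pU + ι (pU ^ 2)}

noncomputable def edgeDefect (g : PSL2Z) : ℤ[Γ] :=
  ι g - (cuspPath (g • cInf) - cuspPath (g • cZero))

lemma edgeDefect_add_edgeDefect_mul_pS (g : PSL2Z) :
    edgeDefect g + edgeDefect (g * pS) = ι g * (1 + ι pS) := by
  simp only [edgeDefect, mul_smul, pS_smul_infty, pS_smul_zero, mul_add, mul_one, ← map_mul]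
  abel

lemma edgeDefect_add_edgeDefect_mul_pU_add_edgeDefect_mul_pU_sq (g : PSL2Z) :
    edgeDefect g + edgeDefect (g * pU) + edgeDefect (g * pU ^ 2) =
      ι g * (1 + ι pU + ι (pU ^ 2)) := by
  simp only [edgeDefect, mul_smul, pow_two, pU_smul_infty, pU_smul_zero, pU_smul_one, mul_add,
    mul_one, ← map_mul, ← mul_assoc]
  abel

lemma edgeDefect_mul_pS_mem_iff (g : PSL2Z) :
    edgeDefect (g * pS) ∈ maninIdeal ↔ edgeDefect g ∈ maninIdeal := by
  have h := edgeDefect_add_edgeDefect_mul_pS g ▸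
    maninIdeal.mul_mem_left (ι g) (Ideal.subset_span (Set.mem_insert _ _))
  exact ⟨fun hS => (maninIdeal.add_mem_iff_left hS).mp h,
    fun h1 => (maninIdeal.add_mem_iff_right h1).mp h⟩

lemma edgeDefect_mem_of_mul_pU (g : PSL2Z) (hU : edgeDefect (g * pU) ∈ maninIdeal)
    (hU2 : edgeDefect (g * pU ^ 2) ∈ maninIdeal) : edgeDefect g ∈ maninIdeal := by
  have h := edgeDefect_add_edgeDefect_mul_pU_add_edgeDefect_mul_pU_sq g ▸
    maninIdeal.mul_mem_left (ι g) (Ideal.subset_span (Set.mem_insert_of_mem _ rfl))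
  exact (maninIdeal.add_mem_iff_left hU).mp ((maninIdeal.add_mem_iff_left hU2).mp h)

lemma edgeDefect_eq_zero_of_smul_infty_of_smul_zero {g : PSL2Z} {r : ℚ} (hinf : g • cInf = r)
    (h0 : g • cZero = parent r) : edgeDefect g = 0 := by
  rw [edgeDefect, hinf, h0, cuspPath_coe, add_sub_cancel_left, sub_eq_zero]
  congr 1
  exact eq_of_smul_zero_eq_of_smul_infty_eq h0 (hinf.trans (parentEdge_smul_infty r).symm)

lemma edgeDefect_mem_of_smul_zero_of_smul_infty {g : PSL2Z} {r : ℚ} (h0 : g • cZero = r)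
    (hinf : g • cInf = parent r) : edgeDefect g ∈ maninIdeal := by
  rw [← edgeDefect_mul_pS_mem_iff, edgeDefect_eq_zero_of_smul_infty_of_smul_zero
    (by rw [mul_smul, pS_smul_infty, h0]) (by rw [mul_smul, pS_smul_zero, hinf])]
  exact zero_mem _

lemma edgeDefect_mem_of_smul_zero_eq_coe {g : PSL2Z} {r : ℚ} (h0 : g • cZero = r)
    (hle : cden (g • cInf) ≤ r.den)
    (ih : ∀ k : PSL2Z, cden (k • cZero) + cden (k • cInf) < r.den + cden (g • cInf) →
      edgeDefect k ∈ maninIdeal) :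
    edgeDefect g ∈ maninIdeal := by
  have hU2 : pU ^ 2 • cInf = ((1 : ℚ) : Cusp) := by
    rw [pow_two, mul_smul, pU_smul_infty, pU_smul_zero]
  have hU2' : pU ^ 2 • cZero = cInf := by rw [pow_two, mul_smul, pU_smul_zero, pU_smul_one]
  have hlt := cden_parent_lt r
  rcases parent_eq_smul_infty_or_smul_one_or_smul_neg_one h0 hle with hp | hp | hp
  · exact edgeDefect_mem_of_smul_zero_of_smul_infty h0 hp.symm
  · -- the Farey triangle on `g` has vertices `r`, `g • ∞` and `parent r`
    refine edgeDefect_mem_of_mul_pU g ?_ ?_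
    · rw [edgeDefect_eq_zero_of_smul_infty_of_smul_zero (r := r)
        (by rw [mul_smul, pU_smul_infty, h0]) (by rw [mul_smul, pU_smul_zero, hp])]
      exact zero_mem _
    · refine ih _ ?_
      rw [mul_smul, mul_smul, hU2, hU2', ← hp]
      omega
  · -- so does the Farey triangle on `g * pS`
    rw [← edgeDefect_mul_pS_mem_iff]
    refine edgeDefect_mem_of_mul_pU _ ?_ ?_
    · refine ih _ ?_
      rw [mul_smul, mul_smul, mul_smul, mul_smul, pU_smul_zero, pU_smul_infty, pS_smul_one,
        pS_smul_zero, ← hp]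
      omega
    · exact edgeDefect_mem_of_smul_zero_of_smul_infty
        (by rw [mul_smul, mul_smul, hU2', pS_smul_infty, h0])
        (by rw [mul_smul, mul_smul, hU2, pS_smul_one, hp])

lemma edgeDefect_mem (g : PSL2Z) : edgeDefect g ∈ maninIdeal := by
  induction hn : cden (g • cZero) + cden (g • cInf) using Nat.strong_induction_on generalizing g
    with | _ n ih => ?_
  wlog hle : cden (g • cInf) ≤ cden (g • cZero) generalizing g
  · rw [← edgeDefect_mul_pS_mem_iff]
    exact this (g * pS) (by rw [mul_smul, mul_smul, pS_smul_zero, pS_smul_infty]; omega)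
      (by rw [mul_smul, mul_smul, pS_smul_zero, pS_smul_infty]; omega)
  induction h0 : g • cZero using OnePoint.rec with
  | infty =>
    rw [h0] at hle
    have hinf : g • cInf = g • cZero := h0 ▸ cden_eq_zero_iff.mp (Nat.le_zero.mp hle)
    exact absurd (smul_left_cancel g hinf) (OnePoint.infty_ne_coe 0)
  | coe r =>
    rw [h0] at hle hn
    exact edgeDefect_mem_of_smul_zero_eq_coe h0 hle fun k hk => ih _ (hn ▸ hk) k rfl

noncomputable def theta1Hom : ℤ[Γ] →+ FreeAbelianGroup Cusp :=
  (Finsupp.lift (FreeAbelianGroup Cusp) ℤ PSL2Z fun g =>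
    FreeAbelianGroup.of (g • cInf) - FreeAbelianGroup.of (g • cZero)).toAddMonoidHom.comp
    MonoidAlgebra.coeffAddEquiv.toAddMonoidHom

lemma theta1Hom_apply (x : ℤ[Γ]) : theta1Hom x = Theta1 x := Finsupp.lift_apply _ _ _ _ _

lemma theta1Hom_of (g : PSL2Z) :
    theta1Hom (ι g) = FreeAbelianGroup.of (g • cInf) - FreeAbelianGroup.of (g • cZero) := by
  simp [theta1Hom, MonoidAlgebra.coeffAddEquiv]

lemma theta1Hom_of_mul (δ : PSL2Z) (x : ℤ[Γ]) :
    theta1Hom (ι δ * x) = FreeAbelianGroup.map (δ • ·) (theta1Hom x) := by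
  induction x using MonoidAlgebra.induction_on with
  | of g =>
    rw [← map_mul, theta1Hom_of, theta1Hom_of, map_sub, FreeAbelianGroup.map_of_apply,
      FreeAbelianGroup.map_of_apply, mul_smul, mul_smul]
  | add x y hx hy => rw [mul_add, map_add, map_add, hx, hy, map_add]
  | smul n x hx => rw [mul_smul_comm, map_zsmul, hx, map_zsmul, map_zsmul]

lemma theta1Hom_mul_eq_zero (a : ℤ[Γ]) {x : ℤ[Γ]} (hx : theta1Hom x = 0) :
    theta1Hom (a * x) = 0 := by
  induction a using MonoidAlgebra.induction_on with
  | of δ => rw [theta1Hom_of_mul, hx, map_zero]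
  | add a b ha hb => rw [add_mul, map_add, ha, hb, add_zero]
  | smul n a ha => rw [smul_mul_assoc, map_zsmul, ha, smul_zero]

lemma theta1Hom_eq_zero_of_mem_maninIdeal {x : ℤ[Γ]} (hx : x ∈ maninIdeal) :
    theta1Hom x = 0 := by
  induction hx using Submodule.span_induction with
  | mem y hy =>
    rcases hy with rfl | rfl
    · simp only [← (MonoidAlgebra.of ℤ PSL2Z).map_one, map_add, theta1Hom_of, one_smul,
        pS_smul_infty, pS_smul_zero]
      abel
    · simp only [← (MonoidAlgebra.of ℤ PSL2Z).map_one, map_add, theta1Hom_of, one_smul, pow_two,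
        mul_smul, pU_smul_infty, pU_smul_zero, pU_smul_one]
      abel
  | zero => exact map_zero _
  | add y z _ _ hy hz => rw [map_add, hy, hz, add_zero]
  | smul a y _ hy => exact theta1Hom_mul_eq_zero a hy

noncomputable def cuspPathHom : FreeAbelianGroup Cusp →+ ℤ[Γ] := FreeAbelianGroup.lift cuspPath

lemma sub_cuspPathHom_theta1Hom_mem (x : ℤ[Γ]) :
    x - cuspPathHom (theta1Hom x) ∈ maninIdeal := by
  induction x using MonoidAlgebra.induction_on with
  | of g =>
    rw [theta1Hom_of, map_sub, cuspPathHom, FreeAbelianGroup.lift_apply_of,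
      FreeAbelianGroup.lift_apply_of]
    exact edgeDefect_mem g
  | add x y hx hy => simpa [add_sub_add_comm] using add_mem hx hy
  | smul n x hx =>
    rw [map_zsmul, map_zsmul, ← smul_sub]
    exact zsmul_mem hx n

/-- Manin's theorem : the kernel of `Θ1` is the left ideal of `ℤ[Γ]` generated by
`1 + S` and `1 + U + U²`. -/
theorem ker_Theta1_eq_Manin_ideal :
    {g : MonoidAlgebra ℤ PSL2Z | Theta1 g = 0} =
      (Ideal.span {(1 : MonoidAlgebra ℤ PSL2Z) + MonoidAlgebra.of ℤ PSL2Z pS,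
          (1 : MonoidAlgebra ℤ PSL2Z) + MonoidAlgebra.of ℤ PSL2Z pU +
            MonoidAlgebra.of ℤ PSL2Z (pU ^ 2)} :
        Ideal (MonoidAlgebra ℤ PSL2Z)) := by
  ext x
  change Theta1 x = 0 ↔ x ∈ maninIdeal
  rw [← theta1Hom_apply]
  refine ⟨fun hx => ?_, theta1Hom_eq_zero_of_mem_maninIdeal⟩
  simpa [hx] using sub_cuspPathHom_theta1Hom_mem x
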